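/- Let K be a cancellative monoid, A a residuated chain (a residuated lattice whose lattice order is total), φ : K → ResEnd(A) a map such that each φ_k is a monoid endomorphism of A admitting a residual φ_k* (φ_k(a) ≤ b iff a ≤ φ_k*(b)), and let f : K × K → A be a 2-cocycle with respect to K, A, φ, meaning: (1) each f(k₁,k₂) is an invertible element of the monoid A; (2) f(k,1) = f(1,k) = 1 for all k ∈ K; (3) φ_1 = id and φ_{k₁k₂}(a) = f(k₁,k₂)·φ_{k₁}(φ_{k₂}(a))·f(k₁,k₂)⁻¹ for all k₁, k₂ ∈ K and a ∈ A; (4) f(k₁, k₂k₃)·φ_{k₁}(f(k₂,k₃)) = f(k₁k₂, k₃)·f(k₁,k₂) for all k₁, k₂, k₃ ∈ K. On R = (A × K) ∪ {⊥, ⊤} define multiplication by (a₁,k₁)·(a₂,k₂) = (a₁·φ_{k₁}(a₂)·f(k₁,k₂)⁻¹, k₁k₂), with ⊥ absorbing on R and ⊤ absorbing on R \ {⊥}, and order R by: ⊥ is the bottom, ⊤ is the top, and (a₁,k₁) ≤ (a₂,k₂) iff k₁ = k₂ and a₁ ≤ a₂ in A. Then R is the reduct of a residuated lattice: multiplication is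 associative with identity (1,1), order-preserving, and for all x, z ∈ R the sets {y : x·y ≤ z} and {y : y·x ≤ z} have maximum elements. -/
import Mathlib


/-- Multiplication on `R = (A × K) ∪ {⊥, ⊤}` twisted by a 2-cocycle:
`(a₁,k₁)·(a₂,k₂) = (a₁·φ_{k₁}(a₂)·f(k₁,k₂)⁻¹, k₁k₂)` (here `g k₁ k₂ = f(k₁,k₂)⁻¹`), with
`⊥ = Sum.inr false` absorbing on `R` and `⊤ = Sum.inr true` absorbing on `R \ {⊥}`. -/
def SdcMul {A K : Type*} [Mul A] [Mul K] (φ : K → A → A) (g : K → K → A) :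
    (A × K ⊕ Bool) → (A × K ⊕ Bool) → (A × K ⊕ Bool)
  | Sum.inr false, _ => Sum.inr false
  | _, Sum.inr false => Sum.inr false
  | Sum.inr true, _ => Sum.inr true
  | _, Sum.inr true => Sum.inr true
  | Sum.inl p, Sum.inl q => Sum.inl (p.1 * φ p.2 q.1 * g p.2 q.2, p.2 * q.2)

/-- The order on `R = (A × K) ∪ {⊥, ⊤}`: `⊥` is the bottom, `⊤` is the top, and
`(a₁,k₁) ≤ (a₂,k₂)` iff `k₁ = k₂` and `a₁ ≤ a₂`. -/
def SdcLe {A K : Type*} [LE A] : (A × K ⊕ Bool) → (A × K ⊕ Bool) → Prop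
  | Sum.inr false, _ => True
  | _, Sum.inr true => True
  | Sum.inl p, Sum.inl q => p.2 = q.2 ∧ p.1 ≤ q.1
  | _, _ => False

section SdcAux
variable {A K : Type*}

section MulAux
variable [Mul A] [Mul K] (φ : K → A → A) (g : K → K → A)

@[simp] theorem sdcMul_bot_left (x : A × K ⊕ Bool) :
    SdcMul φ g (Sum.inr false) x = Sum.inr false := by rcases x with p | (_ | _) <;> rfl

@[simp] theorem sdcMul_bot_right (x : A × K ⊕ Bool) :
    SdcMul φ g x (Sum.inr false) = Sum.inr false := by rcases x with p | (_ | _) <;> rfl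

@[simp] theorem sdcMul_top_inl (q : A × K) :
    SdcMul φ g (Sum.inr true) (Sum.inl q) = Sum.inr true := rfl

@[simp] theorem sdcMul_top_top :
    SdcMul φ g (Sum.inr true) ((Sum.inr true : A × K ⊕ Bool)) = Sum.inr true := rfl

@[simp] theorem sdcMul_inl_top (p : A × K) :
    SdcMul φ g (Sum.inl p) (Sum.inr true) = Sum.inr true := rfl

@[simp] theorem sdcMul_inl_inl (p q : A × K) :
    SdcMul φ g (Sum.inl p) (Sum.inl q) =
      Sum.inl (p.1 * φ p.2 q.1 * g p.2 q.2, p.2 * q.2) := rfl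

end MulAux

section LeAux
variable [LE A]

@[simp] theorem sdcLe_bot_left (x : A × K ⊕ Bool) : SdcLe (Sum.inr false) x := by
  rcases x with p | (_ | _) <;> trivial

@[simp] theorem sdcLe_top_right (x : A × K ⊕ Bool) : SdcLe x (Sum.inr true) := by
  rcases x with p | (_ | _) <;> trivial

@[simp] theorem sdcLe_inl_inl (p q : A × K) :
    SdcLe (Sum.inl p) (Sum.inl q) ↔ p.2 = q.2 ∧ p.1 ≤ q.1 := Iff.rfl

@[simp] theorem sdcLe_inl_bot (p : A × K) :
    SdcLe (Sum.inl p) (Sum.inr false : A × K ⊕ Bool) ↔ False := Iff.rfl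

@[simp] theorem sdcLe_top_bot :
    SdcLe (Sum.inr true : A × K ⊕ Bool) (Sum.inr false) ↔ False := Iff.rfl

@[simp] theorem sdcLe_top_inl (q : A × K) :
    SdcLe (Sum.inr true : A × K ⊕ Bool) (Sum.inl q) ↔ False := Iff.rfl

end LeAux
end SdcAux

set_option maxHeartbeats 1600000 in
/-- Given a cancellative monoid `K`, a residuated chain `A`, a map `φ` of `K` into the
residuated monoid endomorphisms of `A` and a 2-cocycle `f` (with pointwise inverse `finv`),
the twisted product `R_{φ,f}` is the reduct of a residuated lattice: its order is a bounded
lattice order, multiplication is associative with identity `(1,1)`, order-preserving, and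
all division sets have maxima. -/
theorem stmt_18 {A K : Type*} [LinearOrder A] [Monoid A] [Monoid K]
    (ldA rdA : A → A → A)
    (hlA : ∀ x y z : A, x * y ≤ z ↔ y ≤ ldA x z)
    (hrA : ∀ x y z : A, x * y ≤ z ↔ x ≤ rdA z y)
    (hK : ∀ x y z : K, (x * y = x * z → y = z) ∧ (y * x = z * x → y = z))
    (φ : K → A → A) (φs : K → A → A)
    (hφres : ∀ (k : K) (a b : A), φ k a ≤ b ↔ a ≤ φs k b)
    (hφmul : ∀ (k : K) (a b : A), φ k (a * b) = φ k a * φ k b)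
    (hφone : ∀ k : K, φ k 1 = 1)
    (f finv : K → K → A)
    -- (1) each f(k₁,k₂) is invertible, with inverse finv(k₁,k₂)
    (hfinv : ∀ k₁ k₂ : K, f k₁ k₂ * finv k₁ k₂ = 1 ∧ finv k₁ k₂ * f k₁ k₂ = 1)
    -- (2) f(k,1) = f(1,k) = 1
    (hfone : ∀ k : K, f k 1 = 1 ∧ f 1 k = 1)
    -- (3) φ₁ = id and φ_{k₁k₂}(a) = f(k₁,k₂)·φ_{k₁}(φ_{k₂}(a))·f(k₁,k₂)⁻¹
    (hφid : ∀ a : A, φ 1 a = a)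
    (hφcomp : ∀ (k₁ k₂ : K) (a : A), φ (k₁ * k₂) a = f k₁ k₂ * φ k₁ (φ k₂ a) * finv k₁ k₂)
    -- (4) the cocycle identity
    (hcoc : ∀ k₁ k₂ k₃ : K, f k₁ (k₂ * k₃) * φ k₁ (f k₂ k₃) = f (k₁ * k₂) k₃ * f k₁ k₂) :
    -- SdcLe is a partial order
    (∀ x : A × K ⊕ Bool, SdcLe x x) ∧
    (∀ x y : A × K ⊕ Bool, SdcLe x y → SdcLe y x → x = y) ∧
    (∀ x y z : A × K ⊕ Bool, SdcLe x y → SdcLe y z → SdcLe x z) ∧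
    -- with bottom `⊥` and top `⊤`
    (∀ x : A × K ⊕ Bool, SdcLe (Sum.inr false) x ∧ SdcLe x (Sum.inr true)) ∧
    -- it is a lattice order: binary joins and meets exist
    (∀ x y : A × K ⊕ Bool, ∃ j, SdcLe x j ∧ SdcLe y j ∧ ∀ z, SdcLe x z → SdcLe y z → SdcLe j z) ∧
    (∀ x y : A × K ⊕ Bool, ∃ m, SdcLe m x ∧ SdcLe m y ∧ ∀ z, SdcLe z x → SdcLe z y → SdcLe z m) ∧
    -- multiplication is associative with identity (1, 1)
    (∀ x y z : A × K ⊕ Bool,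
      SdcMul φ finv (SdcMul φ finv x y) z = SdcMul φ finv x (SdcMul φ finv y z)) ∧
    (∀ x : A × K ⊕ Bool,
      SdcMul φ finv (Sum.inl ((1 : A), (1 : K))) x = x ∧
      SdcMul φ finv x (Sum.inl ((1 : A), (1 : K))) = x) ∧
    -- multiplication is order-preserving
    (∀ x y z : A × K ⊕ Bool, SdcLe y z →
      SdcLe (SdcMul φ finv x y) (SdcMul φ finv x z) ∧
      SdcLe (SdcMul φ finv y x) (SdcMul φ finv z x)) ∧
    -- all division sets have maxima, so the result is the reduct of a residuated lattice
    (∀ x z : A × K ⊕ Bool,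
      (∃ m, SdcLe (SdcMul φ finv x m) z ∧ ∀ y, SdcLe (SdcMul φ finv x y) z → SdcLe y m) ∧
      (∃ m, SdcLe (SdcMul φ finv m x) z ∧ ∀ y, SdcLe (SdcMul φ finv y x) z → SdcLe y m)) := by
  classical
  -- monotonicity facts from residuation
  have mull : ∀ c : A, ∀ {a b : A}, a ≤ b → c * a ≤ c * b := by
    intro c a b h
    have hb : b ≤ ldA c (c * b) := (hlA c b (c * b)).mp le_rfl
    exact (hlA c a (c * b)).mpr (h.trans hb)
  have mulr : ∀ c : A, ∀ {a b : A}, a ≤ b → a * c ≤ b * c := by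
    intro c a b h
    have hb : b ≤ rdA (b * c) c := (hrA b c (b * c)).mp le_rfl
    exact (hrA a c (b * c)).mpr (h.trans hb)
  have φmono : ∀ k : K, ∀ {a b : A}, a ≤ b → φ k a ≤ φ k b := by
    intro k a b h
    have hb : b ≤ φs k (φ k b) := (hφres k b (φ k b)).mp le_rfl
    exact (hφres k a (φ k b)).mpr (h.trans hb)
  have inv_unique : ∀ x y y' : A, x * y = 1 → y' * x = 1 → y = y' := by
    intro x y y' h1 h2
    have h3 : y' * (x * y) = y' := by rw [h1, mul_one]
    rw [← mul_assoc, h2, one_mul] at h3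
    exact h3
  have key : ∀ k₁ k₂ k₃ : K,
      φ k₁ (finv k₂ k₃) * finv k₁ (k₂ * k₃) = finv k₁ k₂ * finv (k₁ * k₂) k₃ := by
    intro k₁ k₂ k₃
    apply inv_unique (f k₁ (k₂ * k₃) * φ k₁ (f k₂ k₃))
    · have h1 : φ k₁ (f k₂ k₃) * φ k₁ (finv k₂ k₃) = 1 := by
        rw [← hφmul, (hfinv k₂ k₃).1, hφone]
      calc f k₁ (k₂ * k₃) * φ k₁ (f k₂ k₃) * (φ k₁ (finv k₂ k₃) * finv k₁ (k₂ * k₃))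
          = f k₁ (k₂ * k₃) * ((φ k₁ (f k₂ k₃) * φ k₁ (finv k₂ k₃)) * finv k₁ (k₂ * k₃)) := by
            simp only [mul_assoc]
        _ = 1 := by rw [h1, one_mul, (hfinv k₁ (k₂ * k₃)).1]
    · rw [hcoc]
      calc finv k₁ k₂ * finv (k₁ * k₂) k₃ * (f (k₁ * k₂) k₃ * f k₁ k₂)
          = finv k₁ k₂ * ((finv (k₁ * k₂) k₃ * f (k₁ * k₂) k₃) * f k₁ k₂) := by
            simp only [mul_assoc]
        _ = 1 := by rw [(hfinv (k₁ * k₂) k₃).2, one_mul, (hfinv k₁ k₂).2]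
  have finv_one_left : ∀ k : K, finv 1 k = 1 := by
    intro k
    have h := (hfinv 1 k).2
    rwa [(hfone k).2, mul_one] at h
  have finv_one_right : ∀ k : K, finv k 1 = 1 := by
    intro k
    have h := (hfinv k 1).2
    rwa [(hfone k).1, mul_one] at h
  have hrefl : ∀ x : A × K ⊕ Bool, SdcLe x x := by
    rintro (p | (_ | _)) <;> simp
  refine ⟨hrefl, ?_, ?_, ?_, ?_, ?_, ?_, ?_, ?_, ?_⟩
  · -- antisymmetry
    rintro (p | (_ | _)) (q | (_ | _)) h1 h2 <;>
      first
        | rfl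
        | exact congrArg Sum.inl (Prod.ext (le_antisymm h1.2 h2.2) h1.1)
        | simp only [sdcLe_inl_bot, sdcLe_top_bot, sdcLe_top_inl] at h1
        | simp only [sdcLe_inl_bot, sdcLe_top_bot, sdcLe_top_inl] at h2
  · -- transitivity
    rintro (p | (_ | _)) (q | (_ | _)) (r | (_ | _)) h1 h2 <;>
      first
        | exact ⟨h1.1.trans h2.1, h1.2.trans h2.2⟩
        | exact sdcLe_bot_left _
        | exact sdcLe_top_right _
        | simp only [sdcLe_inl_bot, sdcLe_top_bot, sdcLe_top_inl] at h1
        | simp only [sdcLe_inl_bot, sdcLe_top_bot, sdcLe_top_inl] at h2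
  · -- bottom and top
    intro x
    exact ⟨sdcLe_bot_left x, sdcLe_top_right x⟩
  · -- joins
    rintro (p | (_ | _)) (q | (_ | _))
    · by_cases h : p.2 = q.2
      · refine ⟨Sum.inl (max p.1 q.1, q.2), ⟨h, le_max_left _ _⟩, ⟨rfl, le_max_right _ _⟩, ?_⟩
        rintro (r | (_ | _)) h1 h2
        · exact ⟨h2.1, max_le h1.2 h2.2⟩
        · exact absurd h1 (by simp)
        · simp
      · refine ⟨Sum.inr true, by simp, by simp, ?_⟩
        rintro (r | (_ | _)) h1 h2
        · exact absurd (h1.1.trans h2.1.symm) h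
        · exact absurd h1 (by simp)
        · simp
    · exact ⟨Sum.inl p, hrefl _, by simp, fun z h1 _ => h1⟩
    · exact ⟨Sum.inr true, by simp, by simp, fun z _ h2 => h2⟩
    · exact ⟨Sum.inl q, by simp, hrefl _, fun z _ h2 => h2⟩
    · exact ⟨Sum.inr false, by simp, by simp, fun z h1 _ => h1⟩
    · exact ⟨Sum.inr true, by simp, by simp, fun z _ h2 => h2⟩
    · exact ⟨Sum.inr true, by simp, by simp, fun z h1 _ => h1⟩
    · exact ⟨Sum.inr true, by simp, by simp, fun z h1 _ => h1⟩
    · exact ⟨Sum.inr true, by simp, by simp, fun z h1 _ => h1⟩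
  · -- meets
    rintro (p | (_ | _)) (q | (_ | _))
    · by_cases h : p.2 = q.2
      · refine ⟨Sum.inl (min p.1 q.1, p.2), ⟨rfl, min_le_left _ _⟩, ⟨h, min_le_right _ _⟩, ?_⟩
        rintro (r | (_ | _)) h1 h2
        · exact ⟨h1.1, le_min h1.2 h2.2⟩
        · simp
        · exact absurd h1 (by simp)
      · refine ⟨Sum.inr false, by simp, by simp, ?_⟩
        rintro (r | (_ | _)) h1 h2
        · exact absurd (h1.1.symm.trans h2.1) h
        · simp
        · exact absurd h1 (by simp)
    · refine ⟨Sum.inr false, by simp, by simp, ?_⟩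
      rintro (r | (_ | _)) h1 h2 <;> first | exact h1 | exact h2 | simp
    · exact ⟨Sum.inl p, hrefl _, by simp, fun z h1 _ => h1⟩
    · refine ⟨Sum.inr false, by simp, by simp, ?_⟩
      rintro (r | (_ | _)) h1 h2 <;> first | exact h1 | exact h2 | simp
    · refine ⟨Sum.inr false, by simp, by simp, ?_⟩
      rintro (r | (_ | _)) h1 h2 <;> first | exact h1 | exact h2 | simp
    · refine ⟨Sum.inr false, by simp, by simp, ?_⟩
      rintro (r | (_ | _)) h1 h2 <;> first | exact h1 | exact h2 | simp
    · exact ⟨Sum.inl q, by simp, hrefl _, fun z _ h2 => h2⟩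
    · refine ⟨Sum.inr false, by simp, by simp, ?_⟩
      rintro (r | (_ | _)) h1 h2 <;> first | exact h1 | exact h2 | simp
    · exact ⟨Sum.inr true, by simp, by simp, fun z h1 _ => h1⟩
  · -- associativity
    rintro (⟨a₁, k₁⟩ | (_ | _)) (⟨a₂, k₂⟩ | (_ | _)) (⟨a₃, k₃⟩ | (_ | _))
    · simp only [sdcMul_inl_inl, Sum.inl.injEq, Prod.mk.injEq]
      refine ⟨?_, mul_assoc _ _ _⟩
      have h2 : finv k₁ k₂ * f k₁ k₂ = 1 := (hfinv k₁ k₂).2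
      have cancel : ∀ x : A, finv k₁ k₂ * (f k₁ k₂ * x) = x := by
        intro x; rw [← mul_assoc, h2, one_mul]
      simp only [hφmul, hφcomp k₁ k₂, mul_assoc]
      rw [cancel, ← key k₁ k₂ k₃]
    all_goals simp
  · -- identity
    rintro (p | (_ | _))
    · constructor
      · simp only [sdcMul_inl_inl]
        simp [hφid, finv_one_left]
      · simp only [sdcMul_inl_inl]
        simp [hφone, finv_one_right]
    · exact ⟨rfl, rfl⟩
    · exact ⟨rfl, rfl⟩
  · -- monotonicity
    have monoMain : ∀ p q r : A × K, q.2 = r.2 → q.1 ≤ r.1 →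
        SdcLe (SdcMul φ finv (Sum.inl p) (Sum.inl q)) (SdcMul φ finv (Sum.inl p) (Sum.inl r)) ∧
        SdcLe (SdcMul φ finv (Sum.inl q) (Sum.inl p)) (SdcMul φ finv (Sum.inl r) (Sum.inl p)) := by
      intro p q r h hle
      constructor
      · refine ⟨by rw [h], ?_⟩
        rw [h]
        exact mulr _ (mull _ (φmono _ hle))
      · refine ⟨by rw [h], ?_⟩
        rw [h]
        exact mulr _ (mulr _ hle)
    intro x y z hyz
    rcases x with p | (_ | _) <;> rcases y with q | (_ | _) <;> rcases z with r | (_ | _) <;>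
      first
        | exact monoMain p q r hyz.1 hyz.2
        | (constructor <;> first
            | exact sdcLe_bot_left _
            | exact sdcLe_top_right _)
        | simp only [sdcLe_inl_bot, sdcLe_top_bot, sdcLe_top_inl] at hyz
  · -- residuals
    intro x z
    constructor
    · -- right division: max of {y : x*y ≤ z}
      rcases x with p | (_ | _)
      · rcases z with r | (_ | _)
        · by_cases h : ∃ k₂ : K, p.2 * k₂ = r.2
          · obtain ⟨k₂, hk₂⟩ := h
            have iff1 : ∀ c : A, p.1 * φ p.2 c * finv p.2 k₂ ≤ r.1 ↔
                c ≤ φs p.2 (ldA p.1 (rdA r.1 (finv p.2 k₂))) := by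
              intro c
              rw [hrA, hlA, hφres]
            refine ⟨Sum.inl (φs p.2 (ldA p.1 (rdA r.1 (finv p.2 k₂))), k₂),
              ⟨hk₂, (iff1 _).mpr le_rfl⟩, ?_⟩
            rintro (q | (_ | _)) hy
            · have hq : q.2 = k₂ := (hK p.2 q.2 k₂).1 (hy.1.trans hk₂.symm)
              refine ⟨hq, ?_⟩
              have h2 := hy.2
              rw [hq] at h2
              exact (iff1 q.1).mp h2
            · trivial
            · exact absurd hy (by simp)
          · refine ⟨Sum.inr false, by simp, ?_⟩
            rintro (q | (_ | _)) hy
            · exact absurd ⟨q.2, hy.1⟩ h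
            · trivial
            · exact absurd hy (by simp)
        · refine ⟨Sum.inr false, by simp, ?_⟩
          rintro (q | (_ | _)) hy
          · exact absurd hy (by simp)
          · trivial
          · exact absurd hy (by simp)
        · exact ⟨Sum.inr true, by simp, fun y _ => sdcLe_top_right y⟩
      · exact ⟨Sum.inr true, by simp, fun y _ => sdcLe_top_right y⟩
      · rcases z with r | (_ | _)
        · refine ⟨Sum.inr false, by simp, ?_⟩
          rintro (q | (_ | _)) hy
          · exact absurd hy (by simp)
          · trivial
          · exact absurd hy (by simp)
        · refine ⟨Sum.inr false, by simp, ?_⟩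
          rintro (q | (_ | _)) hy
          · exact absurd hy (by simp)
          · trivial
          · exact absurd hy (by simp)
        · exact ⟨Sum.inr true, by simp, fun y _ => sdcLe_top_right y⟩
    · -- left division: max of {y : y*x ≤ z}
      rcases x with p | (_ | _)
      · rcases z with r | (_ | _)
        · by_cases h : ∃ k₁ : K, k₁ * p.2 = r.2
          · obtain ⟨k₁, hk₁⟩ := h
            have iff2 : ∀ c : A, c * φ k₁ p.1 * finv k₁ p.2 ≤ r.1 ↔
                c ≤ rdA r.1 (φ k₁ p.1 * finv k₁ p.2) := by
              intro c
              rw [mul_assoc, hrA]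
            refine ⟨Sum.inl (rdA r.1 (φ k₁ p.1 * finv k₁ p.2), k₁),
              ⟨hk₁, (iff2 _).mpr le_rfl⟩, ?_⟩
            rintro (q | (_ | _)) hy
            · have hq : q.2 = k₁ := (hK p.2 q.2 k₁).2 (hy.1.trans hk₁.symm)
              refine ⟨hq, ?_⟩
              have h2 := hy.2
              rw [hq] at h2
              exact (iff2 q.1).mp h2
            · trivial
            · exact absurd hy (by simp)
          · refine ⟨Sum.inr false, by simp, ?_⟩
            rintro (q | (_ | _)) hy
            · exact absurd ⟨q.2, hy.1⟩ h
            · trivial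
            · exact absurd hy (by simp)
        · refine ⟨Sum.inr false, by simp, ?_⟩
          rintro (q | (_ | _)) hy
          · exact absurd hy (by simp)
          · trivial
          · exact absurd hy (by simp)
        · exact ⟨Sum.inr true, by simp, fun y _ => sdcLe_top_right y⟩
      · exact ⟨Sum.inr true, by simp, fun y _ => sdcLe_top_right y⟩
      · rcases z with r | (_ | _)
        · refine ⟨Sum.inr false, by simp, ?_⟩
          rintro (q | (_ | _)) hy
          · exact absurd hy (by simp)
          · trivial
          · exact absurd hy (by simp)
        · refine ⟨Sum.inr false, by simp, ?_⟩
          rintro (q | (_ | _)) hy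
          · exact absurd hy (by simp)
          · trivial
          · exact absurd hy (by simp)
        · exact ⟨Sum.inr true, by simp, fun y _ => sdcLe_top_right y⟩
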